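/- arXiv:1504.04428 — 3 statements merged into one kernel-verified Lean document; each statement's English description precedes it below -/
import Mathlib

section
/- In the uniform-channel setting, the Bellman operator preserves monotonicity: if V : 𝒬 → ℝ is monotone (Q¹ ≤ Q² componentwise implies V(Q¹) ≤ V(Q²)), then T V is monotone, i.e., Q¹ ≤ Q² componentwise implies (T V)(Q¹) ≤ (T V)(Q²). (This is the induction step proving the monotonicity of the value function, Lemma 2 of the paper.) -/
open Finset

/-- State space of the uniform-channel multicast MDP: request queue vectors capped by `N`. -/
def QSpace (M : ℕ) (N : Fin M → ℕ) : Type :=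
  {Q : Fin M → ℕ // ∀ m, Q m ≤ N m}

/-- Next state when content `u` is multicast in state `Q` and arrival `a` occurs. -/
def nextQ {M : ℕ} {N : Fin M → ℕ} (Q : QSpace M N) (u : Fin M) (a : Fin M → ℕ) :
    QSpace M N :=
  ⟨fun m => min ((if m = u then 0 else Q.1 m) + a m) (N m), fun m => min_le_right _ _⟩

/-- Per-stage cost in the uniform case. -/
noncomputable def gCost {M : ℕ} {N : Fin M → ℕ} (wp wf : ℝ) (p f : Fin M → ℝ)
    (Q : QSpace M N) (u : Fin M) : ℝ :=
  (∑ m, (Q.1 m : ℝ)) + wp * p u + wf * f u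

/-- State-action cost function `J_V(Q,u)`. -/
noncomputable def JCost {M : ℕ} {N : Fin M → ℕ} (𝒜 : Finset (Fin M → ℕ))
    (ρ : (Fin M → ℕ) → ℝ) (wp wf : ℝ) (p f : Fin M → ℝ)
    (V : QSpace M N → ℝ) (Q : QSpace M N) (u : Fin M) : ℝ :=
  gCost wp wf p f Q u + ∑ a ∈ 𝒜, ρ a * V (nextQ Q u a)

/-- Bellman operator `(T V)(Q) = min_u J_V(Q,u)`. -/
noncomputable def TBell {M : ℕ} (hM : 1 ≤ M) {N : Fin M → ℕ} (𝒜 : Finset (Fin M → ℕ))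
    (ρ : (Fin M → ℕ) → ℝ) (wp wf : ℝ) (p f : Fin M → ℝ)
    (V : QSpace M N → ℝ) (Q : QSpace M N) : ℝ :=
  haveI : Nonempty (Fin M) := Fin.pos_iff_nonempty.mp hM
  Finset.univ.inf' Finset.univ_nonempty (fun u => JCost 𝒜 ρ wp wf p f V Q u)

/-- The Bellman operator preserves componentwise monotonicity of the value function. -/
theorem bellman_preserves_monotone
    {M : ℕ} (hM : 1 ≤ M) (N : Fin M → ℕ)
    (𝒜 : Finset (Fin M → ℕ)) (ρ : (Fin M → ℕ) → ℝ)
    (hρ0 : ∀ a ∈ 𝒜, 0 ≤ ρ a) (hρ1 : ∑ a ∈ 𝒜, ρ a = 1)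
    (wp wf : ℝ) (p f : Fin M → ℝ)
    (V : QSpace M N → ℝ)
    (hV : ∀ Q₁ Q₂ : QSpace M N, Q₁.1 ≤ Q₂.1 → V Q₁ ≤ V Q₂) :
    ∀ Q₁ Q₂ : QSpace M N, Q₁.1 ≤ Q₂.1 →
      TBell hM 𝒜 ρ wp wf p f V Q₁ ≤ TBell hM 𝒜 ρ wp wf p f V Q₂ := by
  intro Q₁ Q₂ hle
  have key : ∀ u, JCost 𝒜 ρ wp wf p f V Q₁ u ≤ JCost 𝒜 ρ wp wf p f V Q₂ u := by
    intro u
    unfold JCost gCost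
    have h1 : (∑ m, (Q₁.1 m : ℝ)) ≤ ∑ m, (Q₂.1 m : ℝ) := by
      apply Finset.sum_le_sum; intro m _; exact_mod_cast hle m
    have h2 : ∑ a ∈ 𝒜, ρ a * V (nextQ Q₁ u a) ≤ ∑ a ∈ 𝒜, ρ a * V (nextQ Q₂ u a) := by
      apply Finset.sum_le_sum; intro a ha
      apply mul_le_mul_of_nonneg_left _ (hρ0 a ha)
      apply hV
      intro m
      simp only [nextQ]
      apply min_le_min _ le_rfl
      apply add_le_add _ le_rfl
      split <;> [exact le_rfl; exact hle m]
    linarith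
  unfold TBell
  apply Finset.le_inf'
  intro u _
  exact le_trans (Finset.inf'_le _ (Finset.mem_univ u)) (key u)
end

section
/- Preservation of the maximal supported user index under the partial order ⊵: let q¹, q² : Fin K → ℕ satisfy q² ⊵ q¹, i.e., for every k, if there exists j ≥ k with q¹ j > 0 then q² k ≥ q¹ k, and otherwise q² k = q¹ k. Then the sets {k : q¹ k > 0} and {k : q² k > 0} are either both empty or both nonempty with the same maximum element. (This fact underlies the proofs of Lemmas 5 and 6 of the paper: under ⊵ the user requiring the highest transmission power is unchanged.) -/
open Finset

/-- The partial order `q² ⊵ q¹` on per-content request queue vectors: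
for every user `k`, if some user `j ≥ k` has a pending request under `q¹`
then `q² k ≥ q¹ k`, and otherwise `q² k = q¹ k`. -/
def TriVec {K : ℕ} (q₂ q₁ : Fin K → ℕ) : Prop :=
  ∀ k : Fin K,
    ((∃ j, k ≤ j ∧ 0 < q₁ j) → q₁ k ≤ q₂ k) ∧
    ((¬ ∃ j, k ≤ j ∧ 0 < q₁ j) → q₂ k = q₁ k)

/-- Under `q² ⊵ q¹`, the supports `{k : q¹ k > 0}` and `{k : q² k > 0}` are either both
empty or both nonempty with the same maximum element (the user requiring the highest
transmission power is unchanged). -/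
theorem support_max_preserved {K : ℕ} (hK : 1 ≤ K) (q₁ q₂ : Fin K → ℕ)
    (h : TriVec q₂ q₁) :
    ((Finset.univ.filter fun k => 0 < q₁ k) = ∅ ∧
      (Finset.univ.filter fun k => 0 < q₂ k) = ∅) ∨
    (∃ (h₁ : (Finset.univ.filter fun k => 0 < q₁ k).Nonempty)
        (h₂ : (Finset.univ.filter fun k => 0 < q₂ k).Nonempty),
        (Finset.univ.filter fun k => 0 < q₁ k).max' h₁ =
          (Finset.univ.filter fun k => 0 < q₂ k).max' h₂) := by
  by_cases hempty : (Finset.univ.filter fun k => 0 < q₁ k) = ∅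
  · left
    refine ⟨hempty, ?_⟩
    have hz : ∀ k, ¬ 0 < q₁ k := by
      intro k hk
      have : k ∈ Finset.univ.filter fun k => 0 < q₁ k := by simp [hk]
      simp [hempty] at this
    rw [Finset.filter_eq_empty_iff]
    intro k _
    have := (h k).2 (by
      rintro ⟨j, _, hj⟩; exact hz j hj)
    rw [this]
    exact hz k
  · right
    have h₁ : (Finset.univ.filter fun k => 0 < q₁ k).Nonempty :=
      Finset.nonempty_of_ne_empty hempty
    set m := (Finset.univ.filter fun k => 0 < q₁ k).max' h₁ with hm
    have hm_mem : m ∈ Finset.univ.filter fun k => 0 < q₁ k := Finset.max'_mem _ h₁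
    have hm_pos : 0 < q₁ m := by simpa using hm_mem
    have hq₂m : 0 < q₂ m := lt_of_lt_of_le hm_pos ((h m).1 ⟨m, le_refl _, hm_pos⟩)
    have h₂ : (Finset.univ.filter fun k => 0 < q₂ k).Nonempty :=
      ⟨m, by simp [hq₂m]⟩
    refine ⟨h₁, h₂, ?_⟩
    apply le_antisymm
    · exact Finset.le_max' _ m (by simp [hq₂m])
    · apply Finset.max'_le
      intro k hk
      by_contra hlt
      push_neg at hlt
      have hnone : ¬ ∃ j, k ≤ j ∧ 0 < q₁ j := by
        rintro ⟨j, hkj, hj⟩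
        have : j ≤ m := Finset.le_max' _ j (by simp [hj])
        exact absurd (le_trans hkj this) (not_le.mpr hlt)
      have := (h k).2 hnone
      have hk2 : 0 < q₂ k := by simpa using hk
      rw [this] at hk2
      exact hnone ⟨k, le_refl _, hk2⟩
end

section
/- Separable structure of the value function under a randomized base policy (Lemma 7 of the paper): let M be a finite index set of contents, U a finite action set, and for each m ∈ M let S_m be a finite per-content state space. Let μ̂ : U → ℝ be a randomized policy with μ̂ u ≥ 0 and Σ_{u ∈ U} μ̂ u = 1. For each m ∈ M let g_m : S_m × U → ℝ be a per-content cost, and let P_m : S_m × U → S_m → ℝ be a per-content transition kernel with P_m(s'|s,u) ≥ 0 and Σ_{s' ∈ S_m} P_m(s'|s,u) = 1 for all s, u. Suppose for each m there exist θ_m ∈ ℝ and V_m : S_m → ℝ satisfying θ_m + V_m(s) = Σ_{u ∈ U} μ̂ u · ( g_m(s,u) + Σ_{s' ∈ S_m} P_m(s'|s,u) · V_m(s') ) for all s ∈ S_m. Then, on the product state space S = Π_m S_m, with joint cost g(s,u) = Σ_m g_m(s_m,u), joint kernel P(s'|s,u) = Π_m P_m(s'_m|s_m,u), θ = Σ_m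 θ_m, and V(s) = Σ_m V_m(s_m), one has θ + V(s) = Σ_{u ∈ U} μ̂ u · ( g(s,u) + Σ_{s' ∈ S} P(s'|s,u) · V(s') ) for all s ∈ S. -/
open Finset

lemma key_sum {M : Type} [Fintype M] [DecidableEq M]
    (S : M → Type) [∀ m, Fintype (S m)] [∀ m, DecidableEq (S m)]
    (P : ∀ m, S m → ℝ) (hP1 : ∀ m, ∑ s', P m s' = 1)
    (m : M) (Vm : S m → ℝ) :
    ∑ s' : (∀ k, S k), (∏ k, P k (s' k)) * Vm (s' m)
      = ∑ x, P m x * Vm x := by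
  classical
  set W : ∀ k, S k → ℝ := fun k x => if h : k = m then Vm (h ▸ x) else 1 with hW
  have hWm : ∀ x : S m, W m x = Vm x := fun x => by simp [hW]
  have h1 : ∀ s' : (∀ k, S k), (∏ k, P k (s' k)) * Vm (s' m)
      = ∏ k, (P k (s' k) * W k (s' k)) := by
    intro s'
    rw [Finset.prod_mul_distrib]
    congr 1
    rw [Finset.prod_eq_single m]
    · rw [hWm]
    · intro b _ hb; simp [hW, hb]
    · simp
  simp only [h1]
  rw [← Fintype.prod_sum (fun k x => P k x * W k x)]
  rw [Finset.prod_eq_single m]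
  · simp only [hWm]
  · intro b _ hb
    simp only [hW]
    rw [show (∑ x, P b x * if h : b = m then Vm (h ▸ x) else 1)
        = ∑ x, P b x by
      apply Finset.sum_congr rfl; intro x _; simp [hb]]
    exact hP1 b
  · simp

/-- Separable structure of the value function under a randomized base policy (Lemma 7):
if for each content `m` the pair `(θ m, V m)` solves the per-content policy-evaluation
equation, then `(Σ_m θ m, s ↦ Σ_m V m (s m))` solves the joint policy-evaluation
equation on the product state space. -/
theorem separable_value_function
    (M U : Type) [Fintype M] [DecidableEq M] [Fintype U]
    (S : M → Type) [∀ m, Fintype (S m)] [∀ m, DecidableEq (S m)]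
    (μ : U → ℝ) (hμ0 : ∀ u, 0 ≤ μ u) (hμ1 : ∑ u, μ u = 1)
    (g : ∀ m, S m → U → ℝ)
    (P : ∀ m, S m → U → S m → ℝ)
    (hP0 : ∀ m s u s', 0 ≤ P m s u s')
    (hP1 : ∀ m s u, ∑ s', P m s u s' = 1)
    (θ : M → ℝ) (V : ∀ m, S m → ℝ)
    (hbell : ∀ m (s : S m),
      θ m + V m s = ∑ u, μ u * (g m s u + ∑ s', P m s u s' * V m s')) :
    ∀ s : (∀ m, S m),
      (∑ m, θ m) + (∑ m, V m (s m)) =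
        ∑ u, μ u * ((∑ m, g m (s m) u) +
          ∑ s' : (∀ m, S m), (∏ m, P m (s m) u (s' m)) * (∑ m, V m (s' m))) := by
  intro s
  have hinner : ∀ u, ∑ s' : (∀ m, S m), (∏ m, P m (s m) u (s' m)) * (∑ m, V m (s' m))
      = ∑ m, ∑ x, P m (s m) u x * V m x := by
    intro u
    simp only [Finset.mul_sum]
    rw [Finset.sum_comm]
    exact Finset.sum_congr rfl fun m _ =>
      key_sum S (fun k => P k (s k) u) (fun k => hP1 k (s k) u) m (V m)
  calc (∑ m, θ m) + (∑ m, V m (s m))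
      = ∑ m, (θ m + V m (s m)) := by rw [Finset.sum_add_distrib]
    _ = ∑ m, ∑ u, μ u * (g m (s m) u + ∑ x, P m (s m) u x * V m x) := by
        exact Finset.sum_congr rfl fun m _ => hbell m (s m)
    _ = ∑ u, ∑ m, μ u * (g m (s m) u + ∑ x, P m (s m) u x * V m x) :=
        Finset.sum_comm
    _ = ∑ u, μ u * ((∑ m, g m (s m) u) +
          ∑ s' : (∀ m, S m), (∏ m, P m (s m) u (s' m)) * (∑ m, V m (s' m))) := by
        refine Finset.sum_congr rfl fun u _ => ?_
        rw [hinner u, ← Finset.mul_sum, ← Finset.sum_add_distrib]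
end
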